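/- Let ‖·‖ be a norm on c₀₀ satisfying equation (2.2). Let n ∈ ℕ and let (x_i)_{i=1}^n be a block basis of (e_i) such that each x_i is an ℓ₁^{k_i}-average with constant 2, for some k₁,…,k_n ∈ ℕ, and set k₀ = min{k_i : 1 ≤ i ≤ n}. Then for every ℓ ∈ ℕ and all scalars (a_i)_{i=1}^n ⊆ [−1,1], ‖∑_{i=1}^n a_i x_i‖_ℓ ≤ (1/f(ℓ)) · [ ‖∑_{i=1}^n a_i x_i‖ + 6ℓn·k₀^{−1/2} ]. -/

import Mathlib

open Finset

/-- `c₀₀`: finitely supported functions `ℕ → ℝ`. -/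
abbrev C00 := ℕ →₀ ℝ

/-- `f(t) = log₂(1+t)`. -/
noncomputable def f (t : ℝ) : ℝ := Real.logb 2 (1 + t)

/-- `E < F` for finite sets: every element of `E` is less than every element of `F`. -/
def FinsetLT (E F : Finset ℕ) : Prop := ∀ i ∈ E, ∀ j ∈ F, i < j

/-- `Ex`: coordinatewise product of `x` with the indicator of `E`. -/
noncomputable def restr (E : Finset ℕ) (x : C00) : C00 := x.filter (· ∈ E)

/-- `N` is a norm on `c₀₀`. -/
def IsNorm (N : C00 → ℝ) : Prop :=
  (∀ x y, N (x + y) ≤ N x + N y) ∧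
  (∀ (c : ℝ) (x), N (c • x) = |c| * N x) ∧
  (∀ x, x ≠ 0 → 0 < N x)

/-- the sup norm `‖x‖_∞`. -/
noncomputable def supNorm (x : C00) : ℝ := ⨆ i, |x i|

/-- `((m_i, E_i))_{i=1}^ℓ` is admissible: `2 ≤ m₁ < ⋯ < m_ℓ`, `E₁ < ⋯ < E_ℓ`,
and `f(m_{i+1}) > ∑_{j=1}^i |E_j|`. -/
def Admissible (ℓ : ℕ) (m : Fin ℓ → ℕ) (E : Fin ℓ → Finset ℕ) : Prop :=
  (∀ i, 2 ≤ m i) ∧ StrictMono m ∧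
  (∀ i j : Fin ℓ, i < j → FinsetLT (E i) (E j)) ∧
  ∀ i j : Fin ℓ, (i : ℕ) + 1 = (j : ℕ) →
    (∑ t ∈ Finset.Iic i, ((E t).card : ℝ)) < f (m j)

/-- `|||x|||_m = sup{(1/m) ∑_{i=1}^m ‖F_i x‖ : F₁ < ⋯ < F_m}`. -/
noncomputable def tnorm (N : C00 → ℝ) (m : ℕ) (x : C00) : ℝ :=
  sSup {r | ∃ F : Fin m → Finset ℕ,
    (∀ i j : Fin m, i < j → FinsetLT (F i) (F j)) ∧
    r = (1 / (m : ℝ)) * ∑ i, N (restr (F i) x)}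

/-- `‖x‖_ℓ = sup{(1/f(ℓ)) ∑_{i=1}^ℓ |||E_i x|||_{m_i} : ((m_i,E_i))_{i=1}^ℓ admissible}`. -/
noncomputable def normL (N : C00 → ℝ) (ℓ : ℕ) (x : C00) : ℝ :=
  sSup {r | ∃ (m : Fin ℓ → ℕ) (E : Fin ℓ → Finset ℕ), Admissible ℓ m E ∧
    r = (1 / f ℓ) * ∑ i, tnorm N (m i) (restr (E i) x)}

/-- `‖x‖_{(ℓ,m₀)}`: as `‖x‖_ℓ` but restricted to admissible families with `m₁ ≥ m₀`. -/
noncomputable def normLM (N : C00 → ℝ) (ℓ m₀ : ℕ) (x : C00) : ℝ :=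
  sSup {r | ∃ (m : Fin ℓ → ℕ) (E : Fin ℓ → Finset ℕ), Admissible ℓ m E ∧
    (∀ i, m₀ ≤ m i) ∧
    r = (1 / f ℓ) * ∑ i, tnorm N (m i) (restr (E i) x)}

/-- Equation (2.2):
`‖x‖ = max{‖x‖_∞, sup{(1/f(ℓ)) ∑ |||E_i x|||_{m_i} : ℓ ∈ ℕ, ((m_i,E_i)) admissible}}`. -/
def Eq22 (N : C00 → ℝ) : Prop :=
  ∀ x, N x = max (supNorm x)
    (sSup {r | ∃ (ℓ : ℕ) (m : Fin ℓ → ℕ) (E : Fin ℓ → Finset ℕ), Admissible ℓ m E ∧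
      r = (1 / f ℓ) * ∑ i, tnorm N (m i) (restr (E i) x)})

/-- A finite block basis: nonzero vectors with successive supports. -/
def BlockSeqFin {n : ℕ} (y : Fin n → C00) : Prop :=
  (∀ i, y i ≠ 0) ∧ ∀ i j : Fin n, i < j → FinsetLT (y i).support (y j).support

/-- An infinite block basis of `(e_i)`: nonzero vectors with successive supports. -/
def BlockSeqInf (y : ℕ → C00) : Prop :=
  (∀ i, y i ≠ 0) ∧ ∀ i, FinsetLT (y i).support (y (i + 1)).support

/-- `(z_k)_{k=1}^n` is a (finite) block basis of `(y_i)`. -/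
def FiniteBlockOf {n : ℕ} (z : Fin n → C00) (y : ℕ → C00) : Prop :=
  ∃ (B : Fin n → Finset ℕ) (c : ℕ → ℝ),
    (∀ k k' : Fin n, k < k' → FinsetLT (B k) (B k')) ∧
    (∀ k, z k = ∑ i ∈ B k, c i • y i) ∧ ∀ k, z k ≠ 0

/-- `x` is an `ℓ_p^k`-average with constant `C`. -/
def IsLpAverage (N : C00 → ℝ) (p : ℝ) (k : ℕ) (C : ℝ) (x : C00) : Prop :=
  ∃ y : Fin k → C00, BlockSeqFin y ∧ (∀ i, N (y i) = 1) ∧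
    (∀ a : Fin k → ℝ,
      C⁻¹ * (∑ i, |a i| ^ p) ^ (1 / p) ≤ N (∑ i, a i • y i) ∧
      N (∑ i, a i • y i) ≤ C * (∑ i, |a i| ^ p) ^ (1 / p)) ∧
    x = ((k : ℝ) ^ (-(1 / p))) • ∑ i, y i

/-- `C_p = 4(1 - 2^{-1/p})⁻¹`. -/
noncomputable def Cp (p : ℝ) : ℝ := 4 * (1 - (2 : ℝ) ^ (-(1 / p)))⁻¹

/-!
Split an admissible family `((mᵢ, Eᵢ))` at the last index `p` with `m_p < √k₀`.
Every coordinate of `z = ∑ aᵢ xᵢ` has norm at most `1/k₀`, and admissibility forces `|Eᵢ| < m_p < √k₀`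
for `i < p`, so these pieces contribute at most `1/√k₀` each. For `i > p` we have `mᵢ ≥ √k₀`; the sets of
an `mᵢ`-fold average meet the blocks of an `ℓ₁^k`-average in at most `mᵢ + k` pairs, whence
`|||Eᵢ z|||_{mᵢ} ≤ n/k₀ + n/mᵢ ≤ 2n/√k₀`. The single piece `p` is bounded by `‖z‖`.
-/

open Function

section Restriction

lemma restr_apply (E : Finset ℕ) (x : C00) (j : ℕ) :
    restr E x j = if j ∈ E then x j else 0 :=
  Finsupp.filter_apply _ x j

lemma restr_smul (E : Finset ℕ) (c : ℝ) (x : C00) : restr E (c • x) = c • restr E x :=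
  Finsupp.filter_smul

lemma restr_sum {ι : Type*} (E : Finset ℕ) (s : Finset ι) (g : ι → C00) :
    restr E (∑ i ∈ s, g i) = ∑ i ∈ s, restr E (g i) :=
  Finsupp.filter_sum s g

lemma restr_restr (F E : Finset ℕ) (x : C00) : restr F (restr E x) = restr (F ∩ E) x := by
  ext j
  simp only [restr_apply, Finset.mem_inter]
  split_ifs <;> tauto

lemma restr_singleton (j : ℕ) (x : C00) : restr {j} x = Finsupp.single j (x j) := by
  ext i
  simp only [restr_apply, Finsupp.single_apply, Finset.mem_singleton]
  split_ifs <;> simp_all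

lemma restr_eq_zero_of_disjoint {E : Finset ℕ} {x : C00} (h : Disjoint E x.support) :
    restr E x = 0 :=
  (Finsupp.filter_eq_zero_iff _ _).2 fun _ hj =>
    Finsupp.notMem_support_iff.1 (Finset.disjoint_left.1 h hj)

lemma support_restr (E : Finset ℕ) (x : C00) :
    (restr E x).support = {j ∈ x.support | j ∈ E} :=
  Finsupp.support_filter _ _

lemma supNorm_restr_le (E : Finset ℕ) (x : C00) : supNorm (restr E x) ≤ supNorm x := by
  refine ciSup_mono ((x.finite_range.image abs).bddAbove.mono ?_) fun j => ?_
  · rintro _ ⟨j, rfl⟩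
    exact ⟨x j, ⟨j, rfl⟩, rfl⟩
  · rw [restr_apply]
    split_ifs <;> simp

lemma FinsetLT.disjoint {E F : Finset ℕ} (h : FinsetLT E F) : Disjoint E F :=
  Finset.disjoint_left.2 fun a ha hb => lt_irrefl a (h a ha a hb)

lemma FinsetLT.mono {E F E' F' : Finset ℕ} (h : FinsetLT E F) (hE : E' ⊆ E) (hF : F' ⊆ F) :
    FinsetLT E' F' :=
  fun i hi j hj => h i (hE hi) j (hF hj)

lemma pairwise_disjoint_of_finsetLT {ι : Type*} [LinearOrder ι] {E : ι → Finset ℕ}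
    (h : ∀ i j, i < j → FinsetLT (E i) (E j)) : Pairwise (Disjoint on E) := by
  intro i j hij
  rcases hij.lt_or_gt with hlt | hlt
  · exact (h i j hlt).disjoint
  · exact (h j i hlt).disjoint.symm

lemma sum_apply_of_mem_support {ι : Type*} [Fintype ι] [LinearOrder ι] {v : ι → C00}
    (hv : ∀ s t, s < t → FinsetLT (v s).support (v t).support) {t : ι} {j : ℕ}
    (hj : j ∈ (v t).support) : (∑ i, v i) j = v t j := by
  rw [Finsupp.finsetSum_apply, Finset.sum_eq_single t (fun i _ hi => ?_) (by simp)]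
  exact Finsupp.notMem_support_iff.1
    (Finset.disjoint_right.1 (pairwise_disjoint_of_finsetLT hv hi) hj)

end Restriction

lemma Finset.sum_sum_filter_le_of_pairwise_disjoint {ι α : Type*} [Fintype ι] [DecidableEq α]
    {E : ι → Finset α} (hE : Pairwise (Disjoint on E)) (T : Finset α) {g : α → ℝ}
    (hg : ∀ j, 0 ≤ g j) : ∑ i, ∑ j ∈ T with j ∈ E i, g j ≤ ∑ j ∈ T, g j := by
  rw [← Finset.sum_biUnion (t := fun i => {j ∈ T | j ∈ E i}) fun i _ i' _ hii' =>
    Finset.disjoint_filter.2 fun _ _ hj hj' => Finset.disjoint_left.1 (hE hii') hj hj']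
  exact Finset.sum_le_sum_of_subset_of_nonneg
    (Finset.biUnion_subset.2 fun _ _ => Finset.filter_subset _ _) fun j _ _ => hg j

section Norm

variable {N : C00 → ℝ}

lemma IsNorm.map_zero (hN : IsNorm N) : N 0 = 0 := by
  simpa using hN.2.1 0 0

lemma IsNorm.nonneg (hN : IsNorm N) (x : C00) : 0 ≤ N x := by
  rcases eq_or_ne x 0 with rfl | hx
  · exact hN.map_zero.ge
  · exact (hN.2.2 x hx).le

lemma IsNorm.map_smul (hN : IsNorm N) (c : ℝ) (x : C00) : N (c • x) = |c| * N x :=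
  hN.2.1 c x

lemma IsNorm.sum_le (hN : IsNorm N) {ι : Type*} (s : Finset ι) (g : ι → C00) :
    N (∑ i ∈ s, g i) ≤ ∑ i ∈ s, N (g i) :=
  Finset.le_sum_of_subadditive N hN.map_zero.le hN.1 s g

/-- A crude `ℓ₁`-type majorant of `N`; it makes the set in (2.2) bounded above. -/
noncomputable def coordSum (N : C00 → ℝ) (x : C00) : ℝ :=
  ∑ j ∈ x.support, N (restr {j} x)

lemma IsNorm.le_coordSum (hN : IsNorm N) (x : C00) : N x ≤ coordSum N x := by
  conv_lhs => rw [← x.sum_single]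
  simpa only [coordSum, restr_singleton, Finsupp.sum] using hN.sum_le x.support fun j => Finsupp.single j (x j)

lemma coordSum_restr (N : C00 → ℝ) (E : Finset ℕ) (x : C00) :
    coordSum N (restr E x) = ∑ j ∈ x.support with j ∈ E, N (restr {j} x) := by
  rw [coordSum, support_restr]
  refine Finset.sum_congr rfl fun j hj => ?_
  rw [restr_restr, Finset.singleton_inter_of_mem (Finset.mem_filter.1 hj).2]

lemma sum_coordSum_restr_le (hN : IsNorm N) {ι : Type*} [Fintype ι] {E : ι → Finset ℕ}
    (hE : Pairwise (Disjoint on E)) (x : C00) :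
    ∑ i, coordSum N (restr (E i) x) ≤ coordSum N x := by
  simp only [coordSum_restr]
  exact Finset.sum_sum_filter_le_of_pairwise_disjoint hE _ fun _ => hN.nonneg _

lemma tnorm_le_of_forall {m : ℕ} {x : C00} {B : ℝ} (hB : 0 ≤ B)
    (h : ∀ F : Fin m → Finset ℕ, (∀ i j, i < j → FinsetLT (F i) (F j)) →
      1 / (m : ℝ) * ∑ i, N (restr (F i) x) ≤ B) :
    tnorm N m x ≤ B := by
  refine Real.sSup_le ?_ hB
  rintro r ⟨F, hF, rfl⟩
  exact h F hF

lemma tnorm_nonneg (hN : IsNorm N) (m : ℕ) (x : C00) : 0 ≤ tnorm N m x := by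
  refine Real.sSup_nonneg ?_
  rintro r ⟨F, -, rfl⟩
  exact mul_nonneg (by positivity) (Finset.sum_nonneg fun _ _ => hN.nonneg _)

lemma tnorm_le_coordSum (hN : IsNorm N) (m : ℕ) (x : C00) : tnorm N m x ≤ coordSum N x := by
  refine tnorm_le_of_forall ((hN.nonneg x).trans (hN.le_coordSum x)) fun F hF => ?_
  calc 1 / (m : ℝ) * ∑ i, N (restr (F i) x) ≤ ∑ i, N (restr (F i) x) :=
        mul_le_of_le_one_left (Finset.sum_nonneg fun _ _ => hN.nonneg _)
          (by simpa using Nat.cast_inv_le_one (α := ℝ) m)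
    _ ≤ ∑ i, coordSum N (restr (F i) x) := Finset.sum_le_sum fun _ _ => hN.le_coordSum _
    _ ≤ coordSum N x := sum_coordSum_restr_le hN (pairwise_disjoint_of_finsetLT hF) x

end Norm

section Admissible

lemma f_natCast_le (m : ℕ) : f m ≤ m := by
  rw [f, Real.logb_le_iff_le_rpow one_lt_two (by positivity), Real.rpow_natCast]
  exact_mod_cast (show 1 + m ≤ 2 ^ m by have := m.lt_two_pow_self; omega)

lemma one_div_f_nonneg (ℓ : ℕ) : 0 ≤ 1 / f ℓ :=
  one_div_nonneg.2 (Real.logb_nonneg one_lt_two (by simp))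

/-- For `ℓ = 0` this holds because `f 0 = 0` and `1 / 0 = 0`. -/
lemma one_div_f_le_one (ℓ : ℕ) : 1 / f ℓ ≤ 1 := by
  rcases ℓ.eq_zero_or_pos with rfl | hℓ
  · simp [f]
  · have : (1 : ℝ) ≤ f ℓ := by
      rw [f, Real.le_logb_iff_rpow_le one_lt_two (by positivity), Real.rpow_one]
      have : (1 : ℝ) ≤ ℓ := by exact_mod_cast hℓ
      linarith
    exact div_le_one_of_le₀ this (by linarith)

lemma Admissible.inter {ℓ : ℕ} {m : Fin ℓ → ℕ} {E : Fin ℓ → Finset ℕ}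
    (h : Admissible ℓ m E) (A : Finset ℕ) : Admissible ℓ m fun i => E i ∩ A := by
  obtain ⟨h2, hm, hE, hcard⟩ := h
  refine ⟨h2, hm, fun i j hij => (hE i j hij).mono Finset.inter_subset_left
    Finset.inter_subset_left, fun i j hij => lt_of_le_of_lt ?_ (hcard i j hij)⟩
  gcongr with t
  exact Finset.inter_subset_left

lemma Admissible.card_lt {ℓ : ℕ} {m : Fin ℓ → ℕ} {E : Fin ℓ → Finset ℕ}
    (h : Admissible ℓ m E) {i p : Fin ℓ} (hip : i < p) : ((E i).card : ℝ) < m p := by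
  have hj : (i : ℕ) + 1 < ℓ := by have := p.isLt; omega
  let j : Fin ℓ := ⟨i + 1, hj⟩
  calc ((E i).card : ℝ) ≤ ∑ t ∈ Finset.Iic i, ((E t).card : ℝ) :=
        Finset.single_le_sum (f := fun t => ((E t).card : ℝ)) (fun _ _ => by positivity)
          (Finset.mem_Iic.2 le_rfl)
    _ < f (m j) := h.2.2.2 i j rfl
    _ ≤ m j := f_natCast_le _
    _ ≤ m p := by exact_mod_cast h.2.1.monotone (show j ≤ p from Fin.le_def.2 hip)

lemma Admissible.exists_forall_ne {ℓ : ℕ} {m : Fin ℓ → ℕ} {E : Fin ℓ → Finset ℕ}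
    (h : Admissible ℓ m E) (K : ℝ) (p₀ : Fin ℓ) :
    ∃ p, ∀ i ≠ p, ((E i).card : ℝ) < K ∨ K ≤ m i := by
  let P := Finset.univ.filter fun i => (m i : ℝ) < K
  rcases P.eq_empty_or_nonempty with hP | hP
  · refine ⟨p₀, fun i _ => Or.inr (not_lt.1 fun hi => ?_)⟩
    simpa [P, hi] using Finset.eq_empty_iff_forall_notMem.1 hP i
  refine ⟨P.max' hP, fun i hi => ?_⟩
  by_cases hiP : (m i : ℝ) < K
  · have hlt : i < P.max' hP := lt_of_le_of_ne (P.le_max' i (by simp [P, hiP])) hi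
    exact Or.inl ((h.card_lt hlt).trans (Finset.mem_filter.1 (P.max'_mem hP)).2)
  · exact Or.inr (not_lt.1 hiP)

lemma Admissible.sum_le {ℓ : ℕ} {m : Fin ℓ → ℕ} {E : Fin ℓ → Finset ℕ} (h : Admissible ℓ m E)
    {φ : Fin ℓ → ℝ} {A B K : ℝ} (hA₀ : 0 ≤ A) (hB : 0 ≤ B) (hA : ∀ i, φ i ≤ A)
    (hsmall : ∀ i, ((E i).card : ℝ) < K → φ i ≤ B) (hlarge : ∀ i, K ≤ m i → φ i ≤ B) :
    ∑ i, φ i ≤ A + ℓ * B := by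
  rcases ℓ.eq_zero_or_pos with rfl | hℓ
  · simpa using hA₀
  obtain ⟨p, hp⟩ := h.exists_forall_ne K ⟨0, hℓ⟩
  have hrest : ∑ i ∈ Finset.univ.erase p, φ i ≤ ℓ * B := calc
    _ ≤ (Finset.univ.erase p).card • B := Finset.sum_le_card_nsmul _ _ _ fun i hi =>
          (hp i (Finset.ne_of_mem_erase hi)).elim (hsmall i) (hlarge i)
    _ ≤ ℓ * B := by
          rw [nsmul_eq_mul]
          gcongr
          exact_mod_cast (Finset.card_erase_le).trans (by simp)
  rw [← Finset.add_sum_erase _ _ (Finset.mem_univ p)]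
  exact add_le_add (hA p) hrest

end Admissible

section Eq22

variable {N : C00 → ℝ}

/-- The set whose supremum is the second term in (2.2), so that `hEq x` rewrites to it. -/
def admissibleValues (N : C00 → ℝ) (x : C00) : Set ℝ :=
  {r | ∃ (ℓ : ℕ) (m : Fin ℓ → ℕ) (E : Fin ℓ → Finset ℕ), Admissible ℓ m E ∧
      r = (1 / f ℓ) * ∑ i, tnorm N (m i) (restr (E i) x)}

lemma bddAbove_admissibleValues (hN : IsNorm N) (x : C00) :
    BddAbove (admissibleValues N x) := by
  refine ⟨coordSum N x, ?_⟩
  rintro r ⟨ℓ, m, E, hE, rfl⟩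
  calc 1 / f ℓ * ∑ i, tnorm N (m i) (restr (E i) x) ≤ ∑ i, tnorm N (m i) (restr (E i) x) :=
        mul_le_of_le_one_left (Finset.sum_nonneg fun _ _ => tnorm_nonneg hN _ _)
          (one_div_f_le_one ℓ)
    _ ≤ ∑ i, coordSum N (restr (E i) x) := Finset.sum_le_sum fun _ _ => tnorm_le_coordSum hN _ _
    _ ≤ coordSum N x := sum_coordSum_restr_le hN (pairwise_disjoint_of_finsetLT hE.2.2.1) x

lemma admissibleValues_nonempty (N : C00 → ℝ) (x : C00) : (admissibleValues N x).Nonempty :=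
  ⟨_, 0, Fin.elim0, Fin.elim0, ⟨fun i => i.elim0, fun i => i.elim0, fun i => i.elim0, fun i => i.elim0⟩,
    rfl⟩

lemma N_restr_le (hN : IsNorm N) (hEq : Eq22 N) (E : Finset ℕ) (x : C00) :
    N (restr E x) ≤ N x := by
  have hsub : admissibleValues N (restr E x) ⊆ admissibleValues N x := by
    rintro r ⟨ℓ, m, F, hF, rfl⟩
    refine ⟨ℓ, m, fun i => F i ∩ E, hF.inter E, ?_⟩
    simp only [restr_restr]
  rw [hEq (restr E x), hEq x]
  exact max_le_max (supNorm_restr_le E x) (csSup_le_csSup (bddAbove_admissibleValues hN x)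
    (admissibleValues_nonempty N _) hsub)

lemma tnorm_le (hN : IsNorm N) (hEq : Eq22 N) {m : ℕ} (hm : 0 < m) (x : C00) :
    tnorm N m x ≤ N x := by
  refine tnorm_le_of_forall (hN.nonneg x) fun F _ => ?_
  calc 1 / (m : ℝ) * ∑ i, N (restr (F i) x) ≤ 1 / (m : ℝ) * ∑ _i : Fin m, N x := by
        gcongr with i
        exact N_restr_le hN hEq _ _
    _ = N x := by
        rw [Finset.sum_const, Finset.card_univ, Fintype.card_fin, nsmul_eq_mul]
        field_simp

end Eq22

section Averages

variable {N : C00 → ℝ}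

lemma card_filter_inter_nonempty_le {m k : ℕ} {G : Fin m → Finset ℕ} {Y : Fin k → Finset ℕ}
    (hG : ∀ i j, i < j → FinsetLT (G i) (G j)) (hY : ∀ i j, i < j → FinsetLT (Y i) (Y j)) :
    (Finset.univ.filter fun p : Fin m × Fin k => (G p.1 ∩ Y p.2).Nonempty).card ≤ m + k := by
  set P := Finset.univ.filter fun p : Fin m × Fin k => (G p.1 ∩ Y p.2).Nonempty
  -- the meeting pairs form a chain in the product order, so `p.1 + p.2` is injective on them
  have hchain : ∀ p ∈ P, ∀ q ∈ P, p.1 < q.1 → p.2 ≤ q.2 := by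
    intro p hp q hq h1
    obtain ⟨a, ha⟩ := (Finset.mem_filter.1 hp).2
    obtain ⟨b, hb⟩ := (Finset.mem_filter.1 hq).2
    rw [Finset.mem_inter] at ha hb
    by_contra! h2
    exact lt_asymm (hG _ _ h1 a ha.1 b hb.1) (hY _ _ h2 b hb.2 a ha.2)
  have hinj : Set.InjOn (fun p : Fin m × Fin k => (p.1 : ℕ) + p.2) P := by
    rintro ⟨i, j⟩ hp ⟨i', j'⟩ hq hsum
    simp only at hsum
    rcases lt_trichotomy i i' with h | rfl | h
    · have := hchain _ hp _ hq h
      simp only [Fin.lt_def, Fin.le_def] at h this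
      omega
    · simp only [Prod.mk.injEq, true_and]
      exact Fin.ext (by omega)
    · have := hchain _ hq _ hp h
      simp only [Fin.lt_def, Fin.le_def] at h this
      omega
  calc P.card ≤ (Finset.range (m + k)).card :=
        Finset.card_le_card_of_injOn _ (fun p _ => by simp; omega) hinj
    _ = m + k := Finset.card_range _

lemma sum_N_restr_sum_le (hN : IsNorm N) (hEq : Eq22 N) {m k : ℕ} {y : Fin k → C00}
    (hy : ∀ s t, s < t → FinsetLT (y s).support (y t).support) (hy1 : ∀ s, N (y s) ≤ 1)
    {G : Fin m → Finset ℕ} (hG : ∀ i j, i < j → FinsetLT (G i) (G j)) :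
    ∑ j, N (restr (G j) (∑ s, y s)) ≤ m + k := by
  calc ∑ j, N (restr (G j) (∑ s, y s))
      ≤ ∑ j, ∑ s, if (G j ∩ (y s).support).Nonempty then (1 : ℝ) else 0 := by
        gcongr with j
        rw [restr_sum]
        refine (hN.sum_le _ _).trans (Finset.sum_le_sum fun s _ => ?_)
        split_ifs with hc
        · exact (N_restr_le hN hEq _ _).trans (hy1 s)
        · rw [restr_eq_zero_of_disjoint (Finset.disjoint_iff_inter_eq_empty.2
            (Finset.not_nonempty_iff_eq_empty.1 hc)), hN.map_zero]
    _ = (Finset.univ.filter fun p : Fin m × Fin k =>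
          (G p.1 ∩ (y p.2).support).Nonempty).card := by
        rw [← Fintype.sum_prod_type', Finset.sum_boole]
    _ ≤ m + k := by exact_mod_cast card_filter_inter_nonempty_le hG hy

lemma sum_N_restr_inv_smul_sum_le (hN : IsNorm N) (hEq : Eq22 N) {m k : ℕ} {y : Fin k → C00}
    (hy : ∀ s t, s < t → FinsetLT (y s).support (y t).support) (hy1 : ∀ s, N (y s) ≤ 1)
    {G : Fin m → Finset ℕ} (hG : ∀ i j, i < j → FinsetLT (G i) (G j)) :
    ∑ j, N (restr (G j) ((k : ℝ)⁻¹ • ∑ s, y s)) ≤ m / k + 1 := by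
  simp only [restr_smul, hN.map_smul, abs_inv, Nat.abs_cast, ← Finset.mul_sum]
  rcases k.eq_zero_or_pos with rfl | hk
  · simp
  calc (k : ℝ)⁻¹ * ∑ j, N (restr (G j) (∑ s, y s)) ≤ (k : ℝ)⁻¹ * (m + k) := by
        gcongr
        exact sum_N_restr_sum_le hN hEq hy hy1 hG
    _ = m / k + 1 := by field_simp

lemma IsLpAverage.pos {p C : ℝ} {k : ℕ} {x : C00} (h : IsLpAverage N p k C x) (hx : x ≠ 0) :
    0 < k := by
  obtain ⟨y, -, -, -, rfl⟩ := h
  refine Nat.pos_of_ne_zero fun hk => hx ?_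
  subst hk
  simp

lemma IsLpAverage.eq_inv_smul_sum {C : ℝ} {k : ℕ} {x : C00} (h : IsLpAverage N 1 k C x) :
    ∃ y : Fin k → C00, BlockSeqFin y ∧ (∀ s, N (y s) = 1) ∧ x = (k : ℝ)⁻¹ • ∑ s, y s := by
  obtain ⟨y, hy, h1, -, rfl⟩ := h
  exact ⟨y, hy, h1, by norm_num [Real.rpow_neg_one]⟩

end Averages

section BlockCombination

variable {N : C00 → ℝ} {n : ℕ} {x : Fin n → C00} {k : Fin n → ℕ} {C : ℝ} {k0 : ℕ} {a : Fin n → ℝ}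

lemma N_restr_singleton_le (hN : IsNorm N) (hEq : Eq22 N) (hx : BlockSeqFin x)
    (havg : ∀ i, IsLpAverage N 1 (k i) C (x i)) (hk0 : ∀ i, k0 ≤ k i) (hk0pos : 0 < k0)
    (ha : ∀ i, |a i| ≤ 1) (j : ℕ) :
    N (restr {j} (∑ i, a i • x i)) ≤ (k0 : ℝ)⁻¹ := by
  by_cases hzj : (∑ i, a i • x i) j = 0
  · rw [restr_singleton, hzj, Finsupp.single_zero, hN.map_zero]
    positivity
  obtain ⟨t, -, ht⟩ := Finset.exists_ne_zero_of_sum_ne_zero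
    (by rwa [Finsupp.finsetSum_apply] at hzj)
  obtain ⟨y, hy, hy1, hxt⟩ := (havg t).eq_inv_smul_sum
  have hsumy : (∑ s, y s) j ≠ 0 := by
    intro h0
    apply ht
    rw [Finsupp.smul_apply, hxt, Finsupp.smul_apply, h0, smul_zero, smul_zero]
  obtain ⟨s, -, hs⟩ := Finset.exists_ne_zero_of_sum_ne_zero
    (by rwa [Finsupp.finsetSum_apply] at hsumy)
  have hz : (∑ i, a i • x i) j = (a t * (k t : ℝ)⁻¹) * y s j := by
    rw [sum_apply_of_mem_support (fun i i' h => (hx.2 i i' h).mono Finsupp.support_smul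
      Finsupp.support_smul) (Finsupp.mem_support_iff.2 ht), Finsupp.smul_apply, hxt,
      Finsupp.smul_apply, sum_apply_of_mem_support hy.2 (Finsupp.mem_support_iff.2 hs)]
    simp only [smul_eq_mul]
    ring
  calc N (restr {j} (∑ i, a i • x i)) = |a t| * (k t : ℝ)⁻¹ * N (restr {j} (y s)) := by
        rw [restr_singleton, hz, ← smul_eq_mul, ← Finsupp.smul_single, hN.map_smul,
          restr_singleton, abs_mul, abs_inv, Nat.abs_cast]
    _ ≤ 1 * (k0 : ℝ)⁻¹ * 1 := by
        gcongr
        · exact hN.nonneg _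
        · exact ha t
        · exact hk0 t
        · exact (N_restr_le hN hEq _ _).trans (hy1 s).le
    _ = (k0 : ℝ)⁻¹ := by ring

lemma N_restr_le_card_div (hN : IsNorm N) (hEq : Eq22 N) (hx : BlockSeqFin x)
    (havg : ∀ i, IsLpAverage N 1 (k i) C (x i)) (hk0 : ∀ i, k0 ≤ k i) (hk0pos : 0 < k0)
    (ha : ∀ i, |a i| ≤ 1) (E : Finset ℕ) :
    N (restr E (∑ i, a i • x i)) ≤ E.card / k0 := by
  set z := ∑ i, a i • x i
  calc N (restr E z) ≤ ∑ j ∈ z.support with j ∈ E, N (restr {j} z) := by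
        rw [← coordSum_restr]
        exact hN.le_coordSum _
    _ ≤ ∑ j ∈ z.support with j ∈ E, (k0 : ℝ)⁻¹ := Finset.sum_le_sum fun j _ =>
        N_restr_singleton_le hN hEq hx havg hk0 hk0pos ha j
    _ ≤ E.card / k0 := by
        rw [Finset.sum_const, nsmul_eq_mul, div_eq_mul_inv]
        gcongr
        exact fun j hj => (Finset.mem_filter.1 hj).2

lemma tnorm_restr_le (hN : IsNorm N) (hEq : Eq22 N) (havg : ∀ i, IsLpAverage N 1 (k i) C (x i))
    (hk0 : ∀ i, k0 ≤ k i) (hk0pos : 0 < k0) (ha : ∀ i, |a i| ≤ 1) {m : ℕ} (hm : 0 < m)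
    (E : Finset ℕ) :
    tnorm N m (restr E (∑ i, a i • x i)) ≤ n / k0 + n / m := by
  refine tnorm_le_of_forall (by positivity) fun F hF => ?_
  have hrow : ∀ t, ∑ j, N (restr (F j ∩ E) (x t)) ≤ (m : ℝ) / k0 + 1 := fun t => by
    obtain ⟨y, hy, hy1, hxt⟩ := (havg t).eq_inv_smul_sum
    rw [hxt]
    refine (sum_N_restr_inv_smul_sum_le hN hEq hy.2 (fun s => (hy1 s).le) fun i j hij =>
      (hF i j hij).mono Finset.inter_subset_left Finset.inter_subset_left).trans ?_
    gcongr
    exact hk0 t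
  calc 1 / (m : ℝ) * ∑ j, N (restr (F j) (restr E (∑ i, a i • x i)))
      ≤ 1 / (m : ℝ) * ∑ j, ∑ t, |a t| * N (restr (F j ∩ E) (x t)) := by
        gcongr with j
        rw [restr_restr, restr_sum]
        refine (hN.sum_le _ _).trans_eq (Finset.sum_congr rfl fun t _ => ?_)
        rw [restr_smul, hN.map_smul]
    _ = 1 / (m : ℝ) * ∑ t, |a t| * ∑ j, N (restr (F j ∩ E) (x t)) := by
        rw [Finset.sum_comm]
        simp_rw [Finset.mul_sum]
    _ ≤ 1 / (m : ℝ) * ∑ _t : Fin n, 1 * ((m : ℝ) / k0 + 1) := by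
        gcongr with t
        · exact Finset.sum_nonneg fun _ _ => hN.nonneg _
        · exact ha t
        · exact hrow t
    _ = n / k0 + n / m := by
        rw [Finset.sum_const, Finset.card_univ, Fintype.card_fin, nsmul_eq_mul]
        field_simp

lemma sum_tnorm_restr_le (hN : IsNorm N) (hEq : Eq22 N) (hx : BlockSeqFin x)
    (havg : ∀ i, IsLpAverage N 1 (k i) C (x i)) (hk0 : ∀ i, k0 ≤ k i) (hk0pos : 0 < k0)
    (hn : 0 < n) (ha : ∀ i, |a i| ≤ 1) {ℓ : ℕ} {m : Fin ℓ → ℕ} {E : Fin ℓ → Finset ℕ}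
    (h : Admissible ℓ m E) :
    ∑ i, tnorm N (m i) (restr (E i) (∑ i, a i • x i))
      ≤ N (∑ i, a i • x i) + ℓ * (2 * n / √(k0 : ℝ)) := by
  set z := ∑ i, a i • x i
  set K := √(k0 : ℝ)
  have hK1 : 1 ≤ K := Real.one_le_sqrt.2 (by exact_mod_cast hk0pos)
  have hKK : K * K = k0 := Real.mul_self_sqrt (Nat.cast_nonneg _)
  have hm : ∀ i, 0 < m i := fun i => by have := h.1 i; omega
  have hn1 : (1 : ℝ) ≤ n := by exact_mod_cast hn
  refine h.sum_le (K := K) (hN.nonneg z) (by positivity)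
    (fun i => (tnorm_le hN hEq (hm i) _).trans (N_restr_le hN hEq _ _)) (fun i hi => ?_)
    (fun i hi => ?_)
  · calc tnorm N (m i) (restr (E i) z) ≤ N (restr (E i) z) := tnorm_le hN hEq (hm i) _
      _ ≤ (E i).card / k0 := N_restr_le_card_div hN hEq hx havg hk0 hk0pos ha _
      _ ≤ K / (K * K) := by rw [hKK]; gcongr
      _ = 1 / K := by field_simp
      _ ≤ 2 * n / K := by gcongr; linarith
  · have hKk0 : K ≤ k0 := by nlinarith
    calc tnorm N (m i) (restr (E i) z) ≤ n / k0 + n / m i :=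
          tnorm_restr_le hN hEq havg hk0 hk0pos ha (hm i) _
      _ ≤ n / K + n / K := by gcongr
      _ = 2 * n / K := by ring

end BlockCombination

lemma normL_le_of_forall {N : C00 → ℝ} {ℓ : ℕ} {x : C00} {B : ℝ} (hB : 0 ≤ B)
    (h : ∀ m E, Admissible ℓ m E → ∑ i, tnorm N (m i) (restr (E i) x) ≤ B) :
    normL N ℓ x ≤ 1 / f ℓ * B := by
  refine Real.sSup_le ?_ (mul_nonneg (one_div_f_nonneg ℓ) hB)
  rintro r ⟨m, E, hE, rfl⟩
  exact mul_le_mul_of_nonneg_left (h m E hE) (one_div_f_nonneg ℓ)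

/-- Lemma 2.5. -/
theorem statement9 (N : C00 → ℝ) (hN : IsNorm N) (hEq : Eq22 N)
    (n : ℕ) (x : Fin n → C00) (hx : BlockSeqFin x)
    (k : Fin n → ℕ) (havg : ∀ i, IsLpAverage N 1 (k i) 2 (x i))
    (k0 : ℕ) (hk0 : IsLeast (Set.range k) k0)
    (ℓ : ℕ) (a : Fin n → ℝ) (ha : ∀ i, |a i| ≤ 1) :
    normL N ℓ (∑ i, a i • x i)
      ≤ (1 / f ℓ) * (N (∑ i, a i • x i) + 6 * ℓ * n * (k0 : ℝ) ^ (-(1 / 2) : ℝ)) := by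
  obtain ⟨⟨t₀, rfl⟩, hmin⟩ := hk0
  have hk0 : ∀ i, k t₀ ≤ k i := fun i => hmin ⟨i, rfl⟩
  have hk0pos : 0 < k t₀ := (havg t₀).pos (hx.1 t₀)
  have hsqrt : (k t₀ : ℝ) ^ (-(1 / 2) : ℝ) = (√(k t₀ : ℝ))⁻¹ := by
    rw [Real.sqrt_eq_rpow, Real.rpow_neg (Nat.cast_nonneg _)]
  refine normL_le_of_forall (add_nonneg (hN.nonneg _) (by positivity)) fun m E hE => ?_
  have hε : 0 ≤ ℓ * n * (√(k t₀ : ℝ))⁻¹ := by positivity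
  calc _ ≤ N (∑ i, a i • x i) + ℓ * (2 * n / √(k t₀ : ℝ)) :=
        sum_tnorm_restr_le hN hEq hx havg hk0 hk0pos t₀.pos ha hE
    _ ≤ _ := by
        rw [hsqrt, div_eq_mul_inv]
        linarith
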